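/- Under the β-order neighborhood interference model Y_i(z) = ∑_{S'⊆N_i, |S'|≤β} c_{i,S'} ∏_{j∈S'} z_j with independent Bernoulli(p_i) treatments (p_i ∈ (0,1)), the SNIPE estimator (1/n) ∑_i Y_i(z) ∑_{S⊆N_i, |S|≤β} g(S) ∏_{j∈S} (z_j−p_j)/(p_j(1−p_j)) is an unbiased estimator of the total treatment effect TTE = (1/n) ∑_i ∑_{S'⊆N_i, 1≤|S'|≤β} c_{i,S'}. -/
import Mathlib

open Finset Real

/-- Value of a Bernoulli treatment bit as a real number. -/
noncomputable def zval : Bool → ℝ := fun b => if b then 1 else 0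

/-- Expectation of `f` under `n` mutually independent Bernoulli(`p j`) bits. -/
noncomputable def bexp {n : ℕ} (p : Fin n → ℝ) (f : (Fin n → Bool) → ℝ) : ℝ :=
  ∑ z : Fin n → Bool, (∏ j, if z j then p j else 1 - p j) * f z

/-- The SNIPE coefficient function `g`. -/
noncomputable def gcoef {n : ℕ} (p : Fin n → ℝ) (S : Finset (Fin n)) : ℝ :=
  if S.Nonempty then (∏ s ∈ S, (1 - p s)) - ∏ s ∈ S, (-p s) else 0

lemma bexp_smul {n : ℕ} (p : Fin n → ℝ) (a : ℝ) (f : (Fin n → Bool) → ℝ) :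
    bexp p (fun z => a * f z) = a * bexp p f := by
  simp only [bexp, Finset.mul_sum]
  exact Finset.sum_congr rfl fun z _ => by ring

lemma bexp_sum {n : ℕ} {ι : Type*} (p : Fin n → ℝ) (s : Finset ι)
    (f : ι → (Fin n → Bool) → ℝ) :
    bexp p (fun z => ∑ i ∈ s, f i z) = ∑ i ∈ s, bexp p (f i) := by
  simp only [bexp, Finset.mul_sum]
  exact Finset.sum_comm

lemma bexp_prod {n : ℕ} (p : Fin n → ℝ) (f : Fin n → Bool → ℝ) :
    bexp p (fun z => ∏ j, f j (z j))
      = ∏ j, (p j * f j true + (1 - p j) * f j false) := by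
  have h : ∀ j : Fin n, p j * f j true + (1 - p j) * f j false
      = ∑ b ∈ (Finset.univ : Finset Bool), (if b then p j else 1 - p j) * f j b := by
    intro j; simp
  rw [Finset.prod_congr rfl fun j _ => h j, Finset.prod_univ_sum, Fintype.piFinset_univ]
  unfold bexp
  exact Finset.sum_congr rfl fun z _ => (Finset.prod_mul_distrib).symm

lemma gcoef_eq {n : ℕ} (p : Fin n → ℝ) (S : Finset (Fin n)) :
    gcoef p S = (∏ s ∈ S, (1 - p s)) - ∏ s ∈ S, (-p s) := by
  unfold gcoef
  by_cases h : S.Nonempty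
  · simp [h]
  · simp [Finset.not_nonempty_iff_eq_empty.mp h]

lemma bexp_key {n : ℕ} (p : Fin n → ℝ) (hp : ∀ j, 0 < p j ∧ p j < 1)
    (S' S : Finset (Fin n)) :
    bexp p (fun z => (∏ j ∈ S', zval (z j))
        * ∏ j ∈ S, ((zval (z j) - p j) / (p j * (1 - p j))))
      = (∏ j ∈ S' \ S, p j) * (0 : ℝ) ^ (S \ S').card := by
  have hfun : ∀ z : Fin n → Bool,
      (∏ j ∈ S', zval (z j)) * ∏ j ∈ S, ((zval (z j) - p j) / (p j * (1 - p j)))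
      = ∏ j, ((if j ∈ S' then zval (z j) else 1)
          * (if j ∈ S then (zval (z j) - p j) / (p j * (1 - p j)) else 1)) := by
    intro z
    rw [Finset.prod_mul_distrib, Finset.prod_ite_mem, Finset.prod_ite_mem,
      Finset.univ_inter, Finset.univ_inter]
  rw [show (fun z : Fin n → Bool => (∏ j ∈ S', zval (z j))
        * ∏ j ∈ S, ((zval (z j) - p j) / (p j * (1 - p j))))
      = fun z => ∏ j, ((if j ∈ S' then zval (z j) else 1)
          * (if j ∈ S then (zval (z j) - p j) / (p j * (1 - p j)) else 1))
      from funext hfun]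
  rw [bexp_prod p (fun j b => (if j ∈ S' then zval b else 1)
      * (if j ∈ S then (zval b - p j) / (p j * (1 - p j)) else 1))]
  have hE : ∀ j : Fin n,
      p j * ((if j ∈ S' then zval true else 1)
          * (if j ∈ S then (zval true - p j) / (p j * (1 - p j)) else 1))
      + (1 - p j) * ((if j ∈ S' then zval false else 1)
          * (if j ∈ S then (zval false - p j) / (p j * (1 - p j)) else 1))
      = (if j ∈ S' \ S then p j else 1) * (if j ∈ S \ S' then 0 else 1) := by
    intro j
    have hp0 : p j ≠ 0 := ne_of_gt (hp j).1
    have hp1 : (1 : ℝ) - p j ≠ 0 := by have := (hp j).2; linarith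
    by_cases h1 : j ∈ S' <;> by_cases h2 : j ∈ S <;>
      simp [h1, h2, zval, Finset.mem_sdiff] <;> field_simp <;> ring
  rw [Finset.prod_congr rfl fun j _ => hE j, Finset.prod_mul_distrib,
    Finset.prod_ite_mem, Finset.prod_ite_mem, Finset.univ_inter, Finset.univ_inter,
    Finset.prod_const]

lemma sum_g {n : ℕ} (p : Fin n → ℝ) (S' : Finset (Fin n)) :
    ∑ S ∈ S'.powerset, gcoef p S * ∏ j ∈ S' \ S, p j
      = 1 - (0 : ℝ) ^ S'.card := by
  have h1 : (1 : ℝ) = ∑ S ∈ S'.powerset, (∏ s ∈ S, (1 - p s)) * ∏ j ∈ S' \ S, p j := by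
    rw [← Finset.prod_add]
    simp
  have h2 : (0 : ℝ) ^ S'.card
      = ∑ S ∈ S'.powerset, (∏ s ∈ S, (-p s)) * ∏ j ∈ S' \ S, p j := by
    rw [← Finset.prod_add]
    simp
  rw [h1, h2, ← Finset.sum_sub_distrib]
  exact Finset.sum_congr rfl fun S _ => by rw [gcoef_eq]; ring

/-- Unbiasedness of the SNIPE estimator for the total treatment effect under a
`β`-order neighborhood interference model with independent Bernoulli treatments. -/
theorem stmt4 {n : ℕ} (hn : 0 < n) (p : Fin n → ℝ) (hp : ∀ j, 0 < p j ∧ p j < 1)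
    (N : Fin n → Finset (Fin n)) (β : ℕ) (c : Fin n → Finset (Fin n) → ℝ) :
    bexp p (fun z => (1 / (n : ℝ)) * ∑ i,
      (∑ S' ∈ (N i).powerset.filter (fun S => S.card ≤ β),
        c i S' * ∏ j ∈ S', zval (z j)) *
      (∑ S ∈ (N i).powerset.filter (fun S => S.card ≤ β),
        gcoef p S * ∏ j ∈ S, ((zval (z j) - p j) / (p j * (1 - p j)))))
    = (1 / (n : ℝ)) * ∑ i,
        ∑ S' ∈ (N i).powerset.filter (fun S => 1 ≤ S.card ∧ S.card ≤ β), c i S' := by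
  rw [bexp_smul]
  congr 1
  rw [bexp_sum]
  refine Finset.sum_congr rfl fun i _ => ?_
  set F := (N i).powerset.filter (fun S => S.card ≤ β) with hF
  -- expand product of sums
  have hexp : ∀ z : Fin n → Bool,
      (∑ S' ∈ F, c i S' * ∏ j ∈ S', zval (z j)) *
      (∑ S ∈ F, gcoef p S * ∏ j ∈ S, ((zval (z j) - p j) / (p j * (1 - p j))))
      = ∑ S' ∈ F, ∑ S ∈ F, (c i S' * gcoef p S) *
          ((∏ j ∈ S', zval (z j)) * ∏ j ∈ S, ((zval (z j) - p j) / (p j * (1 - p j)))) := by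
    intro z
    rw [Finset.sum_mul_sum]
    exact Finset.sum_congr rfl fun S' _ => Finset.sum_congr rfl fun S _ => by ring
  calc bexp p (fun z =>
      (∑ S' ∈ F, c i S' * ∏ j ∈ S', zval (z j)) *
      (∑ S ∈ F, gcoef p S * ∏ j ∈ S, ((zval (z j) - p j) / (p j * (1 - p j)))))
      = ∑ S' ∈ F, ∑ S ∈ F, (c i S' * gcoef p S) *
          ((∏ j ∈ S' \ S, p j) * (0 : ℝ) ^ (S \ S').card) := by
        rw [show (fun z : Fin n → Bool =>
            (∑ S' ∈ F, c i S' * ∏ j ∈ S', zval (z j)) *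
            (∑ S ∈ F, gcoef p S * ∏ j ∈ S, ((zval (z j) - p j) / (p j * (1 - p j)))))
          = fun z => ∑ S' ∈ F, ∑ S ∈ F, (c i S' * gcoef p S) *
            ((∏ j ∈ S', zval (z j)) * ∏ j ∈ S, ((zval (z j) - p j) / (p j * (1 - p j))))
          from funext hexp]
        rw [bexp_sum]
        refine Finset.sum_congr rfl fun S' _ => ?_
        rw [bexp_sum]
        refine Finset.sum_congr rfl fun S _ => ?_
        rw [bexp_smul, bexp_key p hp]
    _ = ∑ S' ∈ F, c i S' * (1 - (0 : ℝ) ^ S'.card) := by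
        refine Finset.sum_congr rfl fun S' hS' => ?_
        have h0 : ∀ S : Finset (Fin n), (0 : ℝ) ^ (S \ S').card
            = if S ⊆ S' then 1 else 0 := by
          intro S
          by_cases h : S ⊆ S'
          · simp [Finset.sdiff_eq_empty_iff_subset.mpr h, h]
          · have : (S \ S').Nonempty := by
              rw [Finset.sdiff_nonempty]; exact h
            rw [if_neg h]
            exact zero_pow (Finset.card_ne_zero_of_mem this.choose_spec)
        have hsub : F.filter (fun S => S ⊆ S') = S'.powerset := by
          rw [hF] at hS' ⊢
          simp only [Finset.mem_filter, Finset.mem_powerset] at hS'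
          ext S
          simp only [Finset.mem_filter, Finset.mem_powerset]
          constructor
          · exact fun h => h.2
          · exact fun h => ⟨⟨h.trans hS'.1, le_trans (Finset.card_le_card h) hS'.2⟩, h⟩
        calc ∑ S ∈ F, (c i S' * gcoef p S) * ((∏ j ∈ S' \ S, p j) * (0 : ℝ) ^ (S \ S').card)
            = ∑ S ∈ F, (if S ⊆ S' then (c i S' * gcoef p S) * ∏ j ∈ S' \ S, p j else 0) := by
              refine Finset.sum_congr rfl fun S _ => ?_
              rw [h0 S]
              by_cases h : S ⊆ S' <;> simp [h] <;> ring
          _ = ∑ S ∈ S'.powerset, (c i S' * gcoef p S) * ∏ j ∈ S' \ S, p j := by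
              rw [← Finset.sum_filter, hsub]
          _ = c i S' * ∑ S ∈ S'.powerset, gcoef p S * ∏ j ∈ S' \ S, p j := by
              rw [Finset.mul_sum]
              exact Finset.sum_congr rfl fun S _ => by ring
          _ = c i S' * (1 - (0 : ℝ) ^ S'.card) := by rw [sum_g]
    _ = ∑ S' ∈ (N i).powerset.filter (fun S => 1 ≤ S.card ∧ S.card ≤ β), c i S' := by
        rw [Finset.sum_filter, Finset.sum_filter]
        refine Finset.sum_congr rfl fun S' _ => ?_
        by_cases h1 : S'.card ≤ β <;> by_cases h2 : 1 ≤ S'.card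
        · have : S'.card ≠ 0 := by omega
          simp [h1, h2, zero_pow this]
        · have : S'.card = 0 := by omega
          simp [h1, h2, this]
        · simp [h1, h2]
        · simp [h1, h2]
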